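/- arXiv:1402.4448 — 2 statements merged into one kernel-verified Lean document; each statement's English description precedes it below -/
import Mathlib

section
/- Fix u, v ∈ ℕ. Let G₁ ∈ ℚ[[t]] be the formal power series whose coefficient of t^n is the number of n-step walks in the line model starting at (u,v) and ending at (u+v,0), and let G₂ ∈ ℚ[[t]] be the one counting n-step walks from (u,v) ending at (0,u+v). Then t·(1−p^(2u+2v+4))·G₁ = p^(v+1)·(1−p^(2u+2)) and t·(1−p^(2u+2v+4))·G₂ = p^(u+1)·(1−p^(2v+2)) in ℚ[[t]]. -/
/-! Every step of the line model preserves `x + y`, so a walk from `(u, v)` stays on the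
antidiagonal `x + y = u + v`. The generating functions `F k` of walks ending at `(k, u + v - k)`
satisfy `F k = [k = u] + t (F (k - 1) + F (k + 1))` for `0 ≤ k ≤ u + v` and vanish outside,
which determines them coefficient by coefficient. Since `p = t (1 + p²)`, every power
`p ^ (m + 1) = t (p ^ m + p ^ (m + 2))`, so differences of powers of `p` solve the recurrence
away from `k = u`; gluing two of them that vanish at `k = -1` and `k = u + v + 1` gives
`(1 - p²) t (1 - p ^ (2u + 2v + 4)) F k` in closed form. Evaluating at `k = u + v` and `k = 0`
and cancelling `1 - p²` gives the theorem. -/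

open scoped Classical

/-- The step-set of the line model. -/
def lineSteps : Finset (ℤ × ℤ) := {(1,-1), (-1,1)}

/-- Position after `i` steps of the walk with step sequence `s` starting at `start`. -/
def linePos (start : ℤ × ℤ) {n : ℕ} (s : Fin n → ℤ × ℤ) (i : ℕ) : ℤ × ℤ :=
  start + ∑ j ∈ Finset.univ.filter (fun j : Fin n => (j : ℕ) < i), s j

/-- `n`-step walks of the line model starting at `start`, encoded by their step sequences:
every step lies in `{(1,-1),(-1,1)}` and every intermediate point lies in ℕ². -/
noncomputable def lineWalks (start : ℤ × ℤ) (n : ℕ) : Finset (Fin n → ℤ × ℤ) :=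
  (Fintype.piFinset fun _ : Fin n => lineSteps).filter
    (fun s => ∀ i ≤ n, 0 ≤ (linePos start s i).1 ∧ 0 ≤ (linePos start s i).2)

open PowerSeries Finset

lemma linePos_zero (st : ℤ × ℤ) {n : ℕ} (s : Fin n → ℤ × ℤ) : linePos st s 0 = st := by
  simp [linePos]

lemma linePos_snoc_of_le (st : ℤ × ℤ) {n : ℕ} (t : Fin n → ℤ × ℤ) (x : ℤ × ℤ) {i : ℕ}
    (hi : i ≤ n) : linePos st (Fin.snoc t x) i = linePos st t i := by
  simp only [linePos, sum_filter, Fin.sum_univ_castSucc, Fin.snoc_castSucc, Fin.snoc_last,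
    Fin.val_castSucc, Fin.val_last, if_neg (not_lt.2 hi), add_zero]

lemma linePos_snoc_last (st : ℤ × ℤ) {n : ℕ} (t : Fin n → ℤ × ℤ) (x : ℤ × ℤ) :
    linePos st (Fin.snoc t x) (n + 1) = linePos st t n + x := by
  simp only [linePos, sum_filter, Fin.sum_univ_castSucc, Fin.snoc_castSucc, Fin.snoc_last,
    Fin.is_lt, if_true, add_assoc]

lemma mem_lineWalks {st : ℤ × ℤ} {n : ℕ} {s : Fin n → ℤ × ℤ} :
    s ∈ lineWalks st n ↔
      (∀ j, s j ∈ lineSteps) ∧ ∀ i ≤ n, 0 ≤ (linePos st s i).1 ∧ 0 ≤ (linePos st s i).2 := by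
  simp [lineWalks, Fintype.mem_piFinset]

lemma snoc_mem_lineWalks_iff {st : ℤ × ℤ} {n : ℕ} {t : Fin n → ℤ × ℤ} {x : ℤ × ℤ} :
    Fin.snoc t x ∈ lineWalks st (n + 1) ↔ t ∈ lineWalks st n ∧ x ∈ lineSteps ∧
      0 ≤ (linePos st t n + x).1 ∧ 0 ≤ (linePos st t n + x).2 := by
  rw [mem_lineWalks, mem_lineWalks]
  constructor
  · rintro ⟨hsteps, hpos⟩
    refine ⟨⟨fun j => by simpa using hsteps j.castSucc, fun i hi => ?_⟩,
      by simpa using hsteps (Fin.last n), by simpa [linePos_snoc_last] using hpos (n + 1) le_rfl⟩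
    simpa [linePos_snoc_of_le _ _ _ hi] using hpos i (by omega)
  · rintro ⟨⟨hsteps, hpos⟩, hx, hend⟩
    refine ⟨Fin.lastCases (by simpa using hx) (fun j => by simpa using hsteps j), fun i hi => ?_⟩
    rcases hi.lt_or_eq with hi | rfl
    · rw [linePos_snoc_of_le _ _ _ (by omega)]
      exact hpos i (by omega)
    · rwa [linePos_snoc_last]

noncomputable def lineEndCount (st e : ℤ × ℤ) (n : ℕ) : ℕ :=
  #{s ∈ lineWalks st n | linePos st s n = e}

lemma lineEndCount_zero {st : ℤ × ℤ} (hst : 0 ≤ st.1 ∧ 0 ≤ st.2) (e : ℤ × ℤ) :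
    lineEndCount st e 0 = if e = st then 1 else 0 := by
  have hwalks : lineWalks st 0 = univ := by
    ext s
    simp only [mem_lineWalks, mem_univ, iff_true, Nat.le_zero, forall_eq, linePos_zero]
    exact ⟨finZeroElim, hst⟩
  simp only [lineEndCount, hwalks, linePos_zero]
  split_ifs with h
  · simp [h]
  · simp [Ne.symm h]

lemma lineEndCount_eq_zero {st e : ℤ × ℤ} (he : e.1 < 0 ∨ e.2 < 0) (n : ℕ) :
    lineEndCount st e n = 0 := by
  refine card_eq_zero.2 (filter_eq_empty_iff.2 fun s hs hend => ?_)
  have := (mem_lineWalks.1 hs).2 n le_rfl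
  rw [hend] at this
  omega

lemma lineEndCount_succ (st : ℤ × ℤ) {e : ℤ × ℤ} (he : 0 ≤ e.1 ∧ 0 ≤ e.2) (n : ℕ) :
    lineEndCount st e (n + 1) = ∑ x ∈ lineSteps, lineEndCount st (e - x) n := by
  have hlast : ∀ s ∈ {s ∈ lineWalks st (n + 1) | linePos st s (n + 1) = e},
      s (Fin.last n) ∈ lineSteps := fun s hs =>
    (mem_lineWalks.1 (mem_filter.1 hs).1).1 _
  rw [lineEndCount, card_eq_sum_card_fiberwise hlast]
  refine sum_congr rfl fun x hx => card_nbij' Fin.init (fun t => Fin.snoc t x) ?_ ?_ ?_ ?_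
  · intro s hs
    simp only [mem_coe, mem_filter] at hs ⊢
    obtain ⟨⟨hwalk, hend⟩, rfl⟩ := hs
    rw [← Fin.snoc_init_self s, snoc_mem_lineWalks_iff] at hwalk
    rw [← Fin.snoc_init_self s, linePos_snoc_last] at hend
    exact ⟨hwalk.1, eq_sub_of_add_eq hend⟩
  · intro t ht
    simp only [mem_coe, mem_filter] at ht ⊢
    obtain ⟨hwalk, hend⟩ := ht
    rw [snoc_mem_lineWalks_iff, linePos_snoc_last, hend, sub_add_cancel, Fin.snoc_last]
    exact ⟨⟨⟨hwalk, hx, he⟩, rfl⟩, rfl⟩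
  · intro s hs
    simp only [mem_coe, mem_filter] at hs
    simp only [← hs.2, Fin.snoc_init_self]
  · intro t _
    exact Fin.init_snoc (α := fun _ => ℤ × ℤ) x t

noncomputable def lineGF (st e : ℤ × ℤ) : ℚ⟦X⟧ :=
  mk fun n => (lineEndCount st e n : ℚ)

lemma lineGF_eq {st : ℤ × ℤ} (hst : 0 ≤ st.1 ∧ 0 ≤ st.2) {e : ℤ × ℤ} (he : 0 ≤ e.1 ∧ 0 ≤ e.2) :
    lineGF st e = (if e = st then 1 else 0) + X * ∑ x ∈ lineSteps, lineGF st (e - x) := by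
  ext (_ | n)
  · simp [lineGF, lineEndCount_zero hst, apply_ite]
  · simp [lineGF, lineEndCount_succ st he, coeff_succ_X_mul, map_sum, apply_ite (coeff (n + 1)),
      coeff_one]

lemma lineGF_eq_zero (st : ℤ × ℤ) {e : ℤ × ℤ} (he : e.1 < 0 ∨ e.2 < 0) : lineGF st e = 0 := by
  ext n
  simp [lineGF, lineEndCount_eq_zero he]

lemma lineGF_antidiagonal_rec (u v : ℕ) {k : ℤ} (hk : k ∈ Set.Icc 0 ((u : ℤ) + v)) :
    lineGF (u, v) (k, u + v - k) = (if k = u then 1 else 0) +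
      X * (lineGF (u, v) (k - 1, u + v - (k - 1)) + lineGF (u, v) (k + 1, u + v - (k + 1))) := by
  obtain ⟨hk0, hkN⟩ := hk
  rw [lineGF_eq (by simp) ⟨hk0, by omega⟩, lineSteps, sum_pair (by decide)]
  have hcenter : ((k, u + v - k) : ℤ × ℤ) = ((u : ℤ), (v : ℤ)) ↔ k = u := by
    simp only [Prod.ext_iff]
    omega
  have hleft : ((k, u + v - k) : ℤ × ℤ) - (1, -1) = (k - 1, u + v - (k - 1)) := by
    ext <;> simp; ring
  have hright : ((k, u + v - k) : ℤ × ℤ) - (-1, 1) = (k + 1, u + v - (k + 1)) := by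
    ext <;> simp; ring
  simp only [hcenter, hleft, hright]

theorem eq_zero_of_eq_X_mul_neighbors {R : Type*} [Semiring R] {f : ℤ → R⟦X⟧} {S : Set ℤ}
    (hout : ∀ k ∉ S, f k = 0) (hin : ∀ k ∈ S, f k = X * (f (k - 1) + f (k + 1))) : f = 0 := by
  suffices h : ∀ n k, coeff n (f k) = 0 from funext fun k => ext fun n => by simpa using h n k
  intro n
  induction n with
  | zero =>
    intro k
    by_cases hk : k ∈ S
    · rw [hin k hk, coeff_zero_X_mul]
    · rw [hout k hk, map_zero]
  | succ n ih =>
    intro k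
    by_cases hk : k ∈ S
    · rw [hin k hk, coeff_succ_X_mul, map_add, ih, ih, add_zero]
    · rw [hout k hk, map_zero]

section ClosedForm

variable {R : Type*} [CommRing R]

/-- Outside `0 ≤ k ≤ u + v` one of the two `toNat`s is `0`, so the formula vanishes there. -/
noncomputable def lineClosedForm (p : R⟦X⟧) (u v : ℕ) (k : ℤ) : R⟦X⟧ :=
  p ^ ((k - u).natAbs + 1) * (1 - p ^ (2 * (min k u + 1).toNat)) *
    (1 - p ^ (2 * ((u + v + 1 : ℤ) - max k u).toNat))

variable {p : R⟦X⟧} {u v : ℕ}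

lemma lineClosedForm_eq (k : ℤ) {a b c : ℕ} (ha : (k - u).natAbs = a)
    (hb : (min k u + 1).toNat = b) (hc : ((u + v + 1 : ℤ) - max k u).toNat = c) :
    lineClosedForm p u v k = p ^ (a + 1) * (1 - p ^ (2 * b)) * (1 - p ^ (2 * c)) := by
  subst ha hb hc
  rfl

lemma lineClosedForm_eq_zero {k : ℤ} (hk : k < 0 ∨ (u : ℤ) + v < k) :
    lineClosedForm p u v k = 0 := by
  rcases hk with hk | hk
  · rw [lineClosedForm_eq k rfl (b := 0) (by omega) rfl]
    simp
  · rw [lineClosedForm_eq k rfl rfl (c := 0) (by omega)]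
    simp

lemma lineClosedForm_rec (hp : p = X * (1 + p ^ 2)) {k : ℤ} (hk : k ∈ Set.Icc 0 ((u : ℤ) + v)) :
    lineClosedForm p u v k =
      (if k = u then (1 - p ^ 2) * (X * (1 - p ^ (2 * u + 2 * v + 4))) else 0) +
        X * (lineClosedForm p u v (k - 1) + lineClosedForm p u v (k + 1)) := by
  obtain ⟨hk0, hkN⟩ := hk
  rcases lt_trichotomy k u with hlt | rfl | hgt
  · obtain ⟨m, rfl⟩ := Int.eq_ofNat_of_zero_le hk0
    obtain ⟨a, ha⟩ : ∃ a : ℕ, (a : ℤ) = u - m - 1 := ⟨(u - m - 1 : ℤ).toNat, by omega⟩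
    rw [if_neg hlt.ne, zero_add,
      lineClosedForm_eq m (a := a + 1) (b := m + 1) (c := v + 1) (by omega) (by omega) (by omega),
      lineClosedForm_eq (m - 1) (a := a + 2) (b := m) (c := v + 1) (by omega) (by omega) (by omega),
      lineClosedForm_eq (m + 1) (a := a) (b := m + 2) (c := v + 1) (by omega) (by omega) (by omega)]
    linear_combination (p ^ (a + 1) * (1 - p ^ (2 * (m + 1))) * (1 - p ^ (2 * (v + 1)))) * hp
  · rw [if_pos rfl,
      lineClosedForm_eq u (a := 0) (b := u + 1) (c := v + 1) (by omega) (by omega) (by omega),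
      lineClosedForm_eq (u - 1) (a := 1) (b := u) (c := v + 1) (by omega) (by omega) (by omega),
      lineClosedForm_eq (u + 1) (a := 1) (b := u + 1) (c := v) (by omega) (by omega) (by omega)]
    linear_combination ((1 - p ^ (2 * (u + 1))) * (1 - p ^ (2 * (v + 1)))) * hp
  · obtain ⟨a, ha⟩ : ∃ a : ℕ, (a : ℤ) = k - u - 1 := ⟨(k - u - 1).toNat, by omega⟩
    obtain ⟨c, hc⟩ : ∃ c : ℕ, (c : ℤ) = u + v - k := ⟨(u + v - k).toNat, by omega⟩
    rw [if_neg hgt.ne', zero_add,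
      lineClosedForm_eq k (a := a + 1) (b := u + 1) (c := c + 1) (by omega) (by omega) (by omega),
      lineClosedForm_eq (k - 1) (a := a) (b := u + 1) (c := c + 2) (by omega) (by omega) (by omega),
      lineClosedForm_eq (k + 1) (a := a + 2) (b := u + 1) (c := c) (by omega) (by omega) (by omega)]
    linear_combination (p ^ (a + 1) * (1 - p ^ (2 * (u + 1))) * (1 - p ^ (2 * (c + 1)))) * hp

end ClosedForm

lemma mul_lineGF_antidiagonal_eq_lineClosedForm {p : ℚ⟦X⟧} (hp : p = X * (1 + p ^ 2)) (u v : ℕ)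
    (k : ℤ) :
    (1 - p ^ 2) * (X * (1 - p ^ (2 * u + 2 * v + 4))) * lineGF (u, v) (k, u + v - k) =
      lineClosedForm p u v k := by
  set c := (1 - p ^ 2) * (X * (1 - p ^ (2 * u + 2 * v + 4)))
  suffices h : (fun k : ℤ => c * lineGF (u, v) (k, u + v - k) - lineClosedForm p u v k) = 0 from
    sub_eq_zero.1 (congrFun h k)
  refine eq_zero_of_eq_X_mul_neighbors (S := Set.Icc 0 ((u : ℤ) + v)) (fun k hk => ?_)
    fun k hk => ?_
  · rw [Set.mem_Icc, not_and_or, not_le, not_le] at hk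
    rw [lineGF_eq_zero _ (by omega), lineClosedForm_eq_zero hk, mul_zero, sub_zero]
  · rw [lineGF_antidiagonal_rec u v hk, lineClosedForm_rec hp hk]
    split_ifs <;> ring

theorem line_boundary_gf_general (u v : ℕ) (p : PowerSeries ℚ)
    (hp : p = PowerSeries.X * (1 + p ^ 2)) :
    PowerSeries.X * (1 - p ^ (2 * u + 2 * v + 4)) *
          (PowerSeries.mk fun n =>
            (((lineWalks ((u : ℤ), (v : ℤ)) n).filter
                (fun s => linePos ((u : ℤ), (v : ℤ)) s n = (((u : ℤ) + v), 0))).card : ℚ))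
        = p ^ (v + 1) * (1 - p ^ (2 * u + 2)) ∧
      PowerSeries.X * (1 - p ^ (2 * u + 2 * v + 4)) *
          (PowerSeries.mk fun n =>
            (((lineWalks ((u : ℤ), (v : ℤ)) n).filter
                (fun s => linePos ((u : ℤ), (v : ℤ)) s n = (0, ((u : ℤ) + v)))).card : ℚ))
        = p ^ (u + 1) * (1 - p ^ (2 * v + 2)) := by
  change _ * lineGF (u, v) (u + v, 0) = _ ∧ _ * lineGF (u, v) (0, u + v) = _
  have hp0 : constantCoeff p = 0 := by rw [hp, map_mul, constantCoeff_X, zero_mul]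
  have hsq : (1 - p ^ 2 : ℚ⟦X⟧) ≠ 0 := fun h => by simpa [hp0] using congrArg constantCoeff h
  have hfirst := mul_lineGF_antidiagonal_eq_lineClosedForm hp u v (u + v)
  rw [sub_self, lineClosedForm_eq _ (a := v) (b := u + 1) (c := 1) (by omega) (by omega) (by omega)]
    at hfirst
  have hlast := mul_lineGF_antidiagonal_eq_lineClosedForm hp u v 0
  rw [sub_zero, lineClosedForm_eq _ (a := u) (b := 1) (c := v + 1) (by omega) (by omega) (by omega)]
    at hlast
  constructor
  · exact mul_left_cancel₀ hsq (by linear_combination hfirst)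
  · exact mul_left_cancel₀ hsq (by linear_combination hlast)

/-- Generating functions of line-model walks from `(u,v)` ending at the
two boundary points `(u+v, 0)` and `(0, u+v)`. -/
theorem line_boundary_gf (u v : ℕ) (p : PowerSeries ℚ)
    (hp0 : PowerSeries.constantCoeff p = 0)
    (hp : p = PowerSeries.X * (1 + p ^ 2)) :
    PowerSeries.X * (1 - p ^ (2 * u + 2 * v + 4)) *
          (PowerSeries.mk fun n =>
            (((lineWalks ((u : ℤ), (v : ℤ)) n).filter
                (fun s => linePos ((u : ℤ), (v : ℤ)) s n = (((u : ℤ) + v), 0))).card : ℚ))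
        = p ^ (v + 1) * (1 - p ^ (2 * u + 2)) ∧
      PowerSeries.X * (1 - p ^ (2 * u + 2 * v + 4)) *
          (PowerSeries.mk fun n =>
            (((lineWalks ((u : ℤ), (v : ℤ)) n).filter
                (fun s => linePos ((u : ℤ), (v : ℤ)) s n = (0, ((u : ℤ) + v)))).card : ℚ))
        = p ^ (u + 1) * (1 - p ^ (2 * v + 2)) :=
  line_boundary_gf_general u v p hp
end

section
/- Fix L ∈ ℕ and weights α, β ∈ ℚ. Let G ∈ ℚ[[t]] be the formal power series whose coefficient of t^n is the total weight of all n-step walks in the triangle model starting at the corner (L,0,0). Then (1−p)·(1−p^(L+3))·G = (1−p^3)·(1−p^(L+1)) in ℚ[[t]]. -/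
open scoped Classical

/-- The directed sublattice step-set Ω′. -/
def OmegaA : Finset (ℤ × ℤ × ℤ) := {(1,0,-1), (-1,1,0), (0,-1,1)}

/-- The directed sublattice step-set Ω″. -/
def OmegaB : Finset (ℤ × ℤ × ℤ) := {(1,-1,0), (-1,0,1), (0,1,-1)}

/-- The full step-set Ω₂ = Ω′ ∪ Ω″ of the triangle model. -/
def OmegaFull : Finset (ℤ × ℤ × ℤ) := OmegaA ∪ OmegaB

/-- Position after `i` steps of the walk with step sequence `s` starting at `start`. -/
def triPos (start : ℤ × ℤ × ℤ) {n : ℕ} (s : Fin n → ℤ × ℤ × ℤ) (i : ℕ) : ℤ × ℤ × ℤ :=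
  start + ∑ j ∈ Finset.univ.filter (fun j : Fin n => (j : ℕ) < i), s j

/-- All three coordinates nonnegative. -/
def nonneg3 (v : ℤ × ℤ × ℤ) : Prop := 0 ≤ v.1 ∧ 0 ≤ v.2.1 ∧ 0 ≤ v.2.2

/-- `n`-step walks of the triangle model starting at `start`, encoded by their step
sequences: every step lies in Ω₂ and every intermediate point lies in ℕ³. -/
noncomputable def triWalks (start : ℤ × ℤ × ℤ) (n : ℕ) : Finset (Fin n → ℤ × ℤ × ℤ) :=
  (Fintype.piFinset fun _ : Fin n => OmegaFull).filter
    (fun s => ∀ i ≤ n, nonneg3 (triPos start s i))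

/-- Number of steps of the walk lying in Ω′. -/
noncomputable def countA {n : ℕ} (s : Fin n → ℤ × ℤ × ℤ) : ℕ :=
  (Finset.univ.filter fun j => s j ∈ OmegaA).card

/-- Number of steps of the walk lying in Ω″. -/
noncomputable def countB {n : ℕ} (s : Fin n → ℤ × ℤ × ℤ) : ℕ :=
  (Finset.univ.filter fun j => s j ∈ OmegaB).card

/-!
Let `F s` be the weighted generating function of walks started at `s`. Decomposing by the first
step gives `F s = 1 + t · ∑_ω w(ω) F (s + ω)` for `s ∈ ℕ³`, and `F s = 0` off `ℕ³`. Steps keep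
`u + v + w` fixed, and on each plane `u + v + w = L` this recursion has at most one solution,
because its right side only involves lower-order coefficients.

With `q m = 1 - p ^ (m + 1)`, the family `(1 + p + p²) q(u) q(v) q(w)` vanishes off `ℕ³` and
satisfies the same recursion with constant term `(1 - p)² (1 - p ^ (L + 3))`: after substituting
`p` for `t (α + β) (1 + p + p²)`, this is a polynomial identity in `p`. Evaluating at the corner
`(L, 0, 0)` and cancelling one factor `1 - p` gives the closed form.
-/

open PowerSeries Finset

section StepWeights

variable {R : Type*}

def stepWeight [Zero R] (a b : R) (ω : ℤ × ℤ × ℤ) : R :=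
  if ω ∈ OmegaA then a else if ω ∈ OmegaB then b else 0

lemma coord_sum_eq_zero_of_mem_OmegaFull : ∀ ω ∈ OmegaFull, ω.1 + ω.2.1 + ω.2.2 = 0 := by
  decide

lemma disjoint_OmegaA_OmegaB : Disjoint OmegaA OmegaB := by decide

lemma sum_OmegaA [AddCommMonoid R] (f : ℤ × ℤ × ℤ → R) :
    ∑ ω ∈ OmegaA, f ω = f (1, 0, -1) + f (-1, 1, 0) + f (0, -1, 1) := by
  rw [OmegaA, sum_insert (by decide), sum_insert (by decide), sum_singleton, add_assoc]

lemma sum_OmegaB [AddCommMonoid R] (f : ℤ × ℤ × ℤ → R) :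
    ∑ ω ∈ OmegaB, f ω = f (1, -1, 0) + f (-1, 0, 1) + f (0, 1, -1) := by
  rw [OmegaB, sum_insert (by decide), sum_insert (by decide), sum_singleton, add_assoc]

lemma map_stepWeight {S : Type*} [NonAssocSemiring R] [NonAssocSemiring S] (f : R →+* S)
    (a b : R) (ω : ℤ × ℤ × ℤ) : f (stepWeight a b ω) = stepWeight (f a) (f b) ω := by
  simp only [stepWeight, apply_ite f, map_zero]

lemma sum_OmegaFull_stepWeight_mul [NonUnitalNonAssocSemiring R] (a b : R)
    (f : ℤ × ℤ × ℤ → R) :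
    ∑ ω ∈ OmegaFull, stepWeight a b ω * f ω = a * ∑ ω ∈ OmegaA, f ω + b * ∑ ω ∈ OmegaB, f ω := by
  rw [OmegaFull, sum_union disjoint_OmegaA_OmegaB, mul_sum, mul_sum]
  refine congrArg₂ (· + ·) (sum_congr rfl fun ω hω => ?_) (sum_congr rfl fun ω hω => ?_)
  · rw [stepWeight, if_pos hω]
  · rw [stepWeight, if_neg (disjoint_right.mp disjoint_OmegaA_OmegaB hω), if_pos hω]

lemma pow_countA_mul_pow_countB [CommMonoid R] [Zero R] (a b : R) {n : ℕ}
    {σ : Fin n → ℤ × ℤ × ℤ} (hσ : ∀ j, σ j ∈ OmegaFull) :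
    a ^ countA σ * b ^ countB σ = ∏ j, stepWeight a b (σ j) := by
  have hB : ∀ j, σ j ∈ OmegaB ↔ σ j ∉ OmegaA := fun j =>
    ⟨fun h => disjoint_right.mp disjoint_OmegaA_OmegaB h, (mem_union.mp (hσ j)).resolve_left⟩
  simp only [stepWeight]
  rw [prod_ite, prod_const, prod_congr rfl fun j hj => if_pos ((hB j).mpr (mem_filter.mp hj).2),
    prod_const, countA, countB, filter_congr fun j _ => hB j]

end StepWeights

lemma exists_natCast_of_nonneg3 {s : ℤ × ℤ × ℤ} (hs : nonneg3 s) :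
    ∃ u v w : ℕ, s = ((u : ℤ), (v : ℤ), (w : ℤ)) :=
  ⟨s.1.toNat, s.2.1.toNat, s.2.2.toNat, by
    obtain ⟨h1, h2, h3⟩ := hs
    ext <;> simp [h1, h2, h3]⟩

section Walks

variable {R : Type*} [CommSemiring R]

lemma triPos_zero (start : ℤ × ℤ × ℤ) {n : ℕ} (σ : Fin n → ℤ × ℤ × ℤ) :
    triPos start σ 0 = start := by
  simp [triPos]

lemma triPos_succ (start : ℤ × ℤ × ℤ) {n : ℕ} (σ : Fin (n + 1) → ℤ × ℤ × ℤ) (i : ℕ) :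
    triPos start σ (i + 1) = triPos (start + σ 0) (Fin.tail σ) i := by
  simp only [triPos, sum_filter, Fin.sum_univ_succ, Fin.val_zero, Nat.zero_lt_succ, if_true,
    Fin.val_succ, Nat.succ_lt_succ_iff, Fin.tail, add_assoc]

lemma triWalks_eq_empty {s : ℤ × ℤ × ℤ} (hs : ¬ nonneg3 s) (n : ℕ) : triWalks s n = ∅ :=
  filter_eq_empty_iff.mpr fun σ _ h => hs (triPos_zero s σ ▸ h 0 n.zero_le)

lemma triWalks_zero {s : ℤ × ℤ × ℤ} (hs : nonneg3 s) : triWalks s 0 = univ := by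
  refine eq_univ_of_forall fun σ =>
    mem_filter.mpr ⟨Fintype.mem_piFinset.mpr fun j => j.elim0, fun i hi => ?_⟩
  rwa [Nat.le_zero.mp hi, triPos_zero]

lemma mem_triWalks_succ {s : ℤ × ℤ × ℤ} (hs : nonneg3 s) {n : ℕ}
    (σ : Fin (n + 1) → ℤ × ℤ × ℤ) :
    σ ∈ triWalks s (n + 1) ↔ σ 0 ∈ OmegaFull ∧ Fin.tail σ ∈ triWalks (s + σ 0) n := by
  simp only [triWalks, mem_filter, Fintype.mem_piFinset, Fin.forall_fin_succ]
  constructor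
  · rintro ⟨⟨h0, hsteps⟩, hpos⟩
    exact ⟨h0, hsteps, fun i hi => triPos_succ s σ i ▸ hpos (i + 1) (by omega)⟩
  · rintro ⟨h0, hsteps, hpos⟩
    refine ⟨⟨h0, hsteps⟩, fun i hi => ?_⟩
    rcases i with _ | i
    · rwa [triPos_zero]
    · exact triPos_succ s σ i ▸ hpos i (by omega)

noncomputable def walkGF (w : ℤ × ℤ × ℤ → R) (s : ℤ × ℤ × ℤ) : R⟦X⟧ :=
  mk fun n => ∑ σ ∈ triWalks s n, ∏ j, w (σ j)

lemma sum_prod_triWalks_succ (w : ℤ × ℤ × ℤ → R) {s : ℤ × ℤ × ℤ} (hs : nonneg3 s) (n : ℕ) :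
    ∑ σ ∈ triWalks s (n + 1), ∏ j, w (σ j)
      = ∑ ω ∈ OmegaFull, w ω * ∑ τ ∈ triWalks (s + ω) n, ∏ j, w (τ j) := by
  simp only [mul_sum]
  rw [sum_sigma']
  refine sum_nbij' (fun σ => ⟨σ 0, Fin.tail σ⟩) (fun x => Fin.cons x.1 x.2) ?_ ?_ ?_ ?_ ?_
  · intro σ hσ
    exact mem_sigma.mpr ((mem_triWalks_succ hs σ).mp hσ)
  · intro x hx
    rw [mem_triWalks_succ hs, Fin.cons_zero, Fin.tail_cons]
    exact mem_sigma.mp hx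
  · exact fun σ _ => Fin.cons_self_tail σ
  · exact fun x _ => by simp
  · exact fun σ _ => Fin.prod_univ_succ _

lemma walkGF_of_not_nonneg3 (w : ℤ × ℤ × ℤ → R) {s : ℤ × ℤ × ℤ} (hs : ¬ nonneg3 s) :
    walkGF w s = 0 := by
  ext n
  simp [walkGF, triWalks_eq_empty hs]

lemma walkGF_eq_one_add_X_mul (w : ℤ × ℤ × ℤ → R) {s : ℤ × ℤ × ℤ} (hs : nonneg3 s) :
    walkGF w s = 1 + X * ∑ ω ∈ OmegaFull, C (w ω) * walkGF w (s + ω) := by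
  ext (_ | n)
  · simp [walkGF, triWalks_zero hs]
  · simp [walkGF, coeff_succ_X_mul, coeff_C_mul, sum_prod_triWalks_succ w hs n]

lemma mk_sum_pow_countA_mul_pow_countB (α β : R) (s : ℤ × ℤ × ℤ) :
    (mk fun n => ∑ σ ∈ triWalks s n, α ^ countA σ * β ^ countB σ) = walkGF (stepWeight α β) s :=
  congrArg mk <| funext fun _ => sum_congr rfl fun _ hσ =>
    pow_countA_mul_pow_countB α β (Fintype.mem_piFinset.mp (mem_filter.mp hσ).1)

end Walks

lemma PowerSeries.eq_zero_of_forall_eq_X_mul_sum {R ι κ : Type*} [CommSemiring R]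
    (D : ι → R⟦X⟧) (S : Set ι) (Ω : Finset κ) (c : κ → R⟦X⟧) (next : ι → κ → ι)
    (hS : ∀ i ∈ S, ∀ k ∈ Ω, next i k ∈ S)
    (hD : ∀ i ∈ S, D i = 0 ∨ D i = X * ∑ k ∈ Ω, c k * D (next i k)) :
    ∀ i ∈ S, D i = 0 := by
  have hdvd : ∀ n, ∀ i ∈ S, X ^ n ∣ D i := by
    intro n
    induction n with
    | zero => exact fun i _ => one_dvd _
    | succ n ih =>
      intro i hi
      rcases hD i hi with h | h
      · exact h ▸ dvd_zero _
      · rw [h, pow_succ']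
        exact mul_dvd_mul_left X
          (dvd_sum fun k hk => (ih _ (hS i hi k hk)).mul_left _)
  intro i hi
  ext n
  exact X_pow_dvd_iff.mp (hdvd (n + 1) i hi) n n.lt_succ_self

section Ansatz

variable {A : Type*} [CommRing A] (p : A)

-- `(m + 1).toNat` makes `boxFactor p (-1) = 0`: the ansatz vanishes just outside `ℕ³`.
def boxFactor (m : ℤ) : A := 1 - p ^ (m + 1).toNat

def boxProduct (s : ℤ × ℤ × ℤ) : A := boxFactor p s.1 * boxFactor p s.2.1 * boxFactor p s.2.2

lemma boxFactor_natCast (u : ℕ) : boxFactor p u = 1 - p ^ (u + 1) := by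
  rw [boxFactor, show ((u : ℤ) + 1).toNat = u + 1 by omega]

lemma boxFactor_natCast_add_one (u : ℕ) : boxFactor p (u + 1) = 1 - p ^ (u + 2) := by
  rw [boxFactor, show ((u : ℤ) + 1 + 1).toNat = u + 2 by omega]

lemma boxFactor_natCast_sub_one (u : ℕ) : boxFactor p (u - 1) = 1 - p ^ u := by
  rw [boxFactor, show ((u : ℤ) - 1 + 1).toNat = u by omega]

lemma boxProduct_of_not_nonneg3 {s : ℤ × ℤ × ℤ} (hs : ¬ nonneg3 s) : boxProduct p s = 0 := by
  have hq : ∀ m : ℤ, m < 0 → boxFactor p m = 0 := fun m hm => by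
    rw [boxFactor, show (m + 1).toNat = 0 by omega, pow_zero, sub_self]
  simp only [nonneg3, not_and_or, not_le] at hs
  rcases hs with h | h | h <;> simp [boxProduct, hq _ h]

-- This symmetry is why only `α + β` enters the closed form.
lemma sum_OmegaB_boxProduct_eq_sum_OmegaA (u v w : ℕ) :
    ∑ ω ∈ OmegaB, boxProduct p (((u : ℤ), (v : ℤ), (w : ℤ)) + ω)
      = ∑ ω ∈ OmegaA, boxProduct p (((u : ℤ), (v : ℤ), (w : ℤ)) + ω) := by
  simp only [sum_OmegaA, sum_OmegaB, boxProduct, Prod.mk_add_mk, add_zero, ← sub_eq_add_neg,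
    boxFactor_natCast, boxFactor_natCast_add_one, boxFactor_natCast_sub_one]
  ring

lemma mul_boxProduct_eq_add_mul_sum_OmegaA (u v w : ℕ) :
    (1 + p + p ^ 2) * boxProduct p ((u : ℤ), (v : ℤ), (w : ℤ))
      = (1 - p) ^ 2 * (1 - p ^ (u + v + w + 3))
        + p * ∑ ω ∈ OmegaA, boxProduct p (((u : ℤ), (v : ℤ), (w : ℤ)) + ω) := by
  simp only [sum_OmegaA, boxProduct, Prod.mk_add_mk, add_zero, ← sub_eq_add_neg,
    boxFactor_natCast, boxFactor_natCast_add_one, boxFactor_natCast_sub_one]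
  ring

end Ansatz

section GeneratingFunction

variable {R : Type*} [CommRing R] (α β : R) (p : R⟦X⟧)

lemma mul_boxProduct_eq_add_X_mul_sum (hp : p = C (α + β) * X * (1 + p + p ^ 2)) (u v w : ℕ) :
    (1 + p + p ^ 2) * boxProduct p ((u : ℤ), (v : ℤ), (w : ℤ))
      = (1 - p) ^ 2 * (1 - p ^ (u + v + w + 3)) + X * ∑ ω ∈ OmegaFull, C (stepWeight α β ω) *
          ((1 + p + p ^ 2) * boxProduct p (((u : ℤ), (v : ℤ), (w : ℤ)) + ω)) := by
  have hpS : ∀ S, p * S = X * (C (α + β) * ((1 + p + p ^ 2) * S)) := fun S => by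
    conv_lhs => rw [hp]
    ring
  simp only [map_stepWeight]
  rw [mul_boxProduct_eq_add_mul_sum_OmegaA, sum_OmegaFull_stepWeight_mul, ← mul_sum, ← mul_sum,
    sum_OmegaB_boxProduct_eq_sum_OmegaA, ← add_mul, ← map_add, ← hpS]

lemma walkGF_mul_eq_boxProduct (hp : p = C (α + β) * X * (1 + p + p ^ 2)) (L : ℕ)
    (s : ℤ × ℤ × ℤ) (hs : s.1 + s.2.1 + s.2.2 = L) :
    (1 - p) ^ 2 * (1 - p ^ (L + 3)) * walkGF (stepWeight α β) s
      = (1 + p + p ^ 2) * boxProduct p s := by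
  have key := PowerSeries.eq_zero_of_forall_eq_X_mul_sum
    (fun t => (1 - p) ^ 2 * (1 - p ^ (L + 3)) * walkGF (stepWeight α β) t
      - (1 + p + p ^ 2) * boxProduct p t)
    {t | t.1 + t.2.1 + t.2.2 = L} OmegaFull (fun ω => C (stepWeight α β ω)) (· + ·) ?_ ?_ s hs
  · exact sub_eq_zero.mp key
  · intro t (ht : t.1 + t.2.1 + t.2.2 = L) ω hω
    have := coord_sum_eq_zero_of_mem_OmegaFull ω hω
    simp only [Set.mem_ofPred_eq, Prod.fst_add, Prod.snd_add]
    omega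
  · intro t (ht : t.1 + t.2.1 + t.2.2 = L)
    by_cases hnn : nonneg3 t
    · right
      obtain ⟨u, v, w, rfl⟩ := exists_natCast_of_nonneg3 hnn
      have hL : u + v + w = L := by simp only at ht; omega
      rw [walkGF_eq_one_add_X_mul _ hnn, ← hL, mul_boxProduct_eq_add_X_mul_sum α β p hp]
      generalize (1 - p) ^ 2 * (1 - p ^ (u + v + w + 3)) = c
      simp only [mul_sub, sum_sub_distrib, mul_left_comm _ c, ← mul_sum]
      ring
    · left
      rw [walkGF_of_not_nonneg3 _ hnn, boxProduct_of_not_nonneg3 p hnn, mul_zero, mul_zero,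
        sub_zero]

end GeneratingFunction

theorem triangle_corner_gf_general (L : ℕ) (α β : ℚ) (p : PowerSeries ℚ)
    (hp : p = PowerSeries.C (α + β) * PowerSeries.X * (1 + p + p ^ 2)) :
    (1 - p) * (1 - p ^ (L + 3)) *
        (PowerSeries.mk fun n =>
          ∑ s ∈ triWalks ((L : ℤ), 0, 0) n, α ^ countA s * β ^ countB s)
      = (1 - p ^ 3) * (1 - p ^ (L + 1)) := by
  have hp0 : constantCoeff p = 0 := by
    rw [hp]
    simp
  have h1p : 1 - p ≠ 0 := fun h => by
    simpa [hp0] using congrArg constantCoeff h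
  have hcorner := walkGF_mul_eq_boxProduct α β p hp L ((L : ℤ), 0, 0) (by simp)
  have hbox : boxProduct p ((L : ℤ), 0, 0) = (1 - p ^ (L + 1)) * (1 - p) * (1 - p) := by
    simp [boxProduct, boxFactor]
  rw [mk_sum_pow_countA_mul_pow_countB]
  refine mul_left_cancel₀ h1p ?_
  linear_combination hcorner + (1 + p + p ^ 2) * hbox

/-- The weighted generating function of triangle-model walks starting at
the corner `(L,0,0)` satisfies the closed form (17) of Mortimer–Prellberg. -/
theorem triangle_corner_gf (L : ℕ) (α β : ℚ) (p : PowerSeries ℚ)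
    (hp0 : PowerSeries.constantCoeff p = 0)
    (hp : p = PowerSeries.C (α + β) * PowerSeries.X * (1 + p + p ^ 2)) :
    (1 - p) * (1 - p ^ (L + 3)) *
        (PowerSeries.mk fun n =>
          ∑ s ∈ triWalks ((L : ℤ), 0, 0) n, α ^ countA s * β ^ countB s)
      = (1 - p ^ 3) * (1 - p ^ (L + 1)) :=
  triangle_corner_gf_general L α β p hp
end
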